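/- arXiv:1205.6143 — 2 statements merged into one kernel-verified Lean document; each statement's English description precedes it below -/
import Mathlib

section
/- Let f be a bijection with reversor S, and let Γ be an S-symmetric orbit, i.e., there exist a point x₀ and j ∈ ℤ with S(x₀) = f^j(x₀). Then Γ contains a point fixed by S or a point fixed by f ∘ S: if j = 2k then f^k(x₀) ∈ Fix(S), and if j = 2k - 1 then f^k(x₀) ∈ Fix(f ∘ S). -/
/-!
Conjugating by the reversor inverts every power of `f`, so if `S x₀ = f^j x₀` then the orbit
point `y = f^k x₀` satisfies `S y = f^(-k) (S x₀) = f^(j - 2k) y`. Choosing `k` with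
`j - 2k ∈ {0, -1}` gives `S y = y` or `S y = f⁻¹ y`.
-/

open Function Equiv

theorem Function.Semiconj.perm_zpow {α β : Type*} {S : α → β} {f : Perm α} {g : Perm β}
    (h : Semiconj S f g) (n : ℤ) : Semiconj S ⇑(f ^ n) ⇑(g ^ n) := by
  have pow (m : ℕ) : Semiconj S ⇑(f ^ m) ⇑(g ^ m) := by
    simpa only [Perm.coe_pow] using h.iterate_right m
  cases n with
  | ofNat m => exact pow m
  | negSucc m =>
    rw [zpow_negSucc, zpow_negSucc]
    exact (pow (m + 1)).inverses_right (rightInverse_symm _) (leftInverse_symm _)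

theorem reversor_apply_zpow_of_apply_eq_zpow {M : Type*} {f : Perm M} {S : M → M}
    (hrev : Semiconj S f ⇑f⁻¹) {x₀ : M} {j : ℤ} (hsym : S x₀ = (f ^ j) x₀) (k : ℤ) :
    S ((f ^ k) x₀) = (f ^ (j - 2 * k)) ((f ^ k) x₀) := by
  rw [hrev.perm_zpow k x₀, hsym, inv_zpow', ← Perm.mul_apply, ← Perm.mul_apply, ← zpow_add,
    ← zpow_add]
  congr 2
  ring

/-- A symmetric orbit of a reversible map contains a point on Fix(S) or Fix(f ∘ S):
if S(x₀) = f^j(x₀) with j = 2k then f^k(x₀) ∈ Fix(S); if j = 2k - 1 then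
f^k(x₀) ∈ Fix(f ∘ S). -/
theorem symmetric_orbit_hits_fixed_sets {M : Type*} (f : Equiv.Perm M) (S : M → M)
    (hrev : ∀ x, S (f x) = f⁻¹ (S x)) (x₀ : M) (j : ℤ)
    (hsym : S x₀ = (f ^ j) x₀) :
    (∀ k : ℤ, j = 2 * k → S ((f ^ k) x₀) = (f ^ k) x₀) ∧
    (∀ k : ℤ, j = 2 * k - 1 → f (S ((f ^ k) x₀)) = (f ^ k) x₀) := by
  have orbit_sym := reversor_apply_zpow_of_apply_eq_zpow hrev hsym
  refine ⟨fun k hk => ?_, fun k hk => ?_⟩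
  · rw [orbit_sym k, hk, sub_self, zpow_zero, Perm.one_apply]
  · rw [orbit_sym k, hk, show 2 * k - 1 - 2 * k = -1 by ring, zpow_neg_one]
    exact f.apply_symm_apply _
end

section
/- Let F be a bijection of ℝ^d × ℝ^k commuting with the translation T_m(x,z) = (x+m, z), i.e. F ∘ T_m = T_m ∘ F, with reversor S satisfying S ∘ T_m = T_{-m} ∘ S. If (x₀,z₀) ∈ Fix(S) satisfies F^n(x₀,z₀) = T_m(x₀,z₀) with n = 2ℓ even, then F^ℓ(x₀,z₀) ∈ Fix(S ∘ T_{-m}). -/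
/-- If (x₀,z₀) ∈ Fix(S) is an (m,n)-periodic point of F with n = 2ℓ even, then
F^ℓ(x₀,z₀) ∈ Fix(S ∘ T₋ₘ). -/
theorem half_period_even {d k : ℕ}
    (F : Equiv.Perm ((Fin d → ℝ) × (Fin k → ℝ)))
    (S : ((Fin d → ℝ) × (Fin k → ℝ)) → ((Fin d → ℝ) × (Fin k → ℝ)))
    (T : (Fin d → ℤ) → ((Fin d → ℝ) × (Fin k → ℝ)) → ((Fin d → ℝ) × (Fin k → ℝ)))
    (hT : ∀ v p, T v p = (p.1 + fun i => (v i : ℝ), p.2))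
    (m : Fin d → ℤ)
    (hFT : ⇑F ∘ T m = T m ∘ ⇑F)
    (hrev : S ∘ ⇑F = ⇑F⁻¹ ∘ S)
    (hST : S ∘ T m = T (-m) ∘ S)
    (p₀ : (Fin d → ℝ) × (Fin k → ℝ)) (hfix : S p₀ = p₀)
    (ℓ : ℕ) (hper : (⇑F)^[2 * ℓ] p₀ = T m p₀) :
    S (T (-m) ((⇑F)^[ℓ] p₀)) = (⇑F)^[ℓ] p₀ := by
  -- T m and T (-m) are inverse to each other
  have hTmm : ∀ q, T m (T (-m) q) = q := by
    intro q
    rw [hT, hT]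
    ext i <;> simp
  have hTmm' : ∀ q, T (-m) (T m q) = q := by
    intro q
    rw [hT, hT]
    ext i <;> simp
  -- S (T (-m) q) = T m (S q)
  have hSTm : ∀ q, S (T (-m) q) = T m (S q) := by
    intro q
    have h := congrFun hST (T (-m) q)
    simp only [Function.comp_apply, hTmm] at h
    rw [h, hTmm]
  -- F⁻¹ commutes with T m
  have hFiT : ∀ q, F⁻¹ (T m q) = T m (F⁻¹ q) := by
    intro q
    have h := congrFun hFT (F⁻¹ q)
    simp only [Function.comp_apply, Equiv.apply_symm_apply,
      Equiv.Perm.inv_def] at h ⊢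
    rw [← h, Equiv.symm_apply_apply]
  -- S ∘ F^[n] = (F⁻¹)^[n] ∘ S
  have hSFn : ∀ n q, S ((⇑F)^[n] q) = (⇑F⁻¹)^[n] (S q) := by
    intro n
    induction n with
    | zero => intro q; simp
    | succ n ih =>
      intro q
      rw [Function.iterate_succ_apply', Function.iterate_succ_apply', ← ih]
      exact congrFun hrev _
  -- (F⁻¹)^[ℓ] commutes with T m
  have hFinT : ∀ n q, (⇑F⁻¹)^[n] (T m q) = T m ((⇑F⁻¹)^[n] q) := by
    intro n
    induction n with
    | zero => intro q; simp
    | succ n ih =>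
      intro q
      rw [Function.iterate_succ_apply, hFiT, ih, Function.iterate_succ_apply]
  -- F^[ℓ] p₀ = T m ((F⁻¹)^[ℓ] p₀)
  have key : (⇑F)^[ℓ] p₀ = T m ((⇑F⁻¹)^[ℓ] p₀) := by
    have h1 : (⇑F⁻¹)^[ℓ] ((⇑F)^[2 * ℓ] p₀) = (⇑F)^[ℓ] p₀ := by
      rw [two_mul, Function.iterate_add_apply]
      have : ∀ q, (⇑F⁻¹)^[ℓ] ((⇑F)^[ℓ] q) = q := by
        intro q
        rw [← Function.comp_apply (f := (⇑F⁻¹)^[ℓ]), ← Function.Commute.comp_iterate]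
        · simp [Function.iterate_fixed]
        · intro x; simp
      rw [this]
    rw [hper, hFinT] at h1
    exact h1.symm
  -- S ∘ (F⁻¹)^[n] = F^[n] ∘ S
  have hSFn' : ∀ n q, S ((⇑F⁻¹)^[n] q) = (⇑F)^[n] (S q) := by
    intro n
    induction n with
    | zero => intro q; simp
    | succ n ih =>
      intro q
      rw [Function.iterate_succ_apply', Function.iterate_succ_apply', ← ih]
      have h := congrFun hrev (F⁻¹ ((⇑F⁻¹)^[n] q))
      simp only [Function.comp_apply, Equiv.Perm.inv_def, Equiv.apply_symm_apply] at h
      refine F.symm.injective ?_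
      rw [Equiv.symm_apply_apply]
      exact h.symm
  have h2 := congrFun hST ((⇑F⁻¹)^[ℓ] p₀)
  simp only [Function.comp_apply] at h2
  rw [hSTm, key, h2, hSFn', hfix, hTmm]
  exact key
end
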